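/- A dynamical system (X,T) is both minimal and weakly mixing if and only if ω_{N_T}(x) = X for every x ∈ X. -/

import Mathlib

open Filter Topology Set Metric

section Defs

variable {X : Type*}

/-- A set is "opene" if it is open and nonempty. -/
def Opene [TopologicalSpace X] (U : Set X) : Prop := IsOpen U ∧ U.Nonempty

/-- `N_T(U,V) = {n ∈ ℕ : U ∩ T⁻ⁿV ≠ ∅}`. -/
def NTset (T : X → X) (U V : Set X) : Set ℕ := {n | (U ∩ T^[n] ⁻¹' V).Nonempty}

/-- `N_T(x,G) = {n ∈ ℕ : Tⁿx ∈ G}`. -/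
def NTpt (T : X → X) (x : X) (G : Set X) : Set ℕ := {n | T^[n] x ∈ G}

/-- `ω_{N_T}(x)`. -/
def omegaNT [TopologicalSpace X] (T : X → X) (x : X) : Set X :=
  {z | ∀ G : Set X, IsOpen G → z ∈ G → ∀ U V : Set X, Opene U → Opene V →
    (NTpt T x G ∩ NTset T U V).Nonempty}

/-- The ω-limit set `ω_T(x)`. -/
def omegaT [TopologicalSpace X] (T : X → X) (x : X) : Set X :=
  {z | ∀ G : Set X, IsOpen G → z ∈ G → (NTpt T x G).Infinite}

/-- Transitive compact system. -/
def TransCompact [TopologicalSpace X] (T : X → X) : Prop :=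
  ∀ x : X, (omegaNT T x).Nonempty

/-- Topologically transitive system. -/
def TopTransitive [TopologicalSpace X] (T : X → X) : Prop :=
  ∀ U V : Set X, Opene U → Opene V → (NTset T U V).Nonempty

/-- Weakly mixing: the product system `(X×X, T×T)` is topologically transitive. -/
def WeaklyMixing [TopologicalSpace X] (T : X → X) : Prop :=
  TopTransitive (fun p : X × X => (T p.1, T p.2))

/-- Totally transitive: `(X, T^k)` is transitive for every `k ≥ 1`. -/
def TotallyTransitive [TopologicalSpace X] (T : X → X) : Prop :=
  ∀ k : ℕ, 1 ≤ k → TopTransitive (T^[k])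

/-- Minimal system: every point has dense orbit. -/
def MinimalSystem [TopologicalSpace X] (T : X → X) : Prop :=
  ∀ x : X, Dense (Set.range fun n : ℕ => T^[n] x)

/-- A minimal subset: nonempty, closed, `T M = M`, with no proper nonempty closed invariant subset. -/
def IsMinimalSubset [TopologicalSpace X] (T : X → X) (M : Set X) : Prop :=
  M.Nonempty ∧ IsClosed M ∧ T '' M = M ∧
    ∀ M' : Set X, M' ⊆ M → M'.Nonempty → IsClosed M' → T '' M' = M' → M' = M

/-- A minimal point: one that lies in some minimal subset. -/
def IsMinimalPoint [TopologicalSpace X] (T : X → X) (x : X) : Prop :=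
  ∃ M : Set X, IsMinimalSubset T M ∧ x ∈ M

/-- An M-system: transitive with a dense set of minimal points. -/
def MSystem [TopologicalSpace X] (T : X → X) : Prop :=
  TopTransitive T ∧ Dense {x : X | IsMinimalPoint T x}

/-- Thick subset of ℕ. -/
def ThickSet (S : Set ℕ) : Prop := ∀ N : ℕ, ∃ m : ℕ, ∀ i ≤ N, m + i ∈ S

/-- Syndetic subset of ℕ. -/
def SyndeticSet (S : Set ℕ) : Prop := ∃ N : ℕ, ∀ i : ℕ, ∃ j ≤ N, i + j ∈ S

/-- Thickly syndetic subset of ℕ. -/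
def ThicklySyndeticSet (S : Set ℕ) : Prop :=
  ∀ N : ℕ, SyndeticSet {m : ℕ | ∀ i ≤ N, m + i ∈ S}

/-- `S_T(U,δ)`. -/
def STset [MetricSpace X] (T : X → X) (U : Set X) (δ : ℝ) : Set ℕ :=
  {n | ∃ x ∈ U, ∃ y ∈ U, δ < dist (T^[n] x) (T^[n] y)}

/-- Thickly sensitive system. -/
def ThicklySensitive [MetricSpace X] (T : X → X) : Prop :=
  ∃ δ : ℝ, 0 < δ ∧ ∀ U : Set X, Opene U → ThickSet (STset T U δ)

/-- Thickly syndetically sensitive system. -/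
def ThicklySyndeticallySensitive [MetricSpace X] (T : X → X) : Prop :=
  ∃ δ : ℝ, 0 < δ ∧ ∀ U : Set X, Opene U → ThicklySyndeticSet (STset T U δ)

/-- Multi-sensitive system. -/
def MultiSensitive [MetricSpace X] (T : X → X) : Prop :=
  ∃ δ : ℝ, 0 < δ ∧ ∀ (k : ℕ) (U : Fin (k + 1) → Set X), (∀ i, Opene (U i)) →
    (⋂ i, STset T (U i) δ).Nonempty

/-- Thickly syndetically transitive system. -/
def ThicklySyndeticallyTransitive [TopologicalSpace X] (T : X → X) : Prop :=
  ∀ U V : Set X, Opene U → Opene V → ThicklySyndeticSet (NTset T U V)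

/-- A proximal pair: `liminf d(Tⁿx,Tⁿy) = 0`. -/
def ProximalPair [MetricSpace X] (T : X → X) (x y : X) : Prop :=
  liminf (fun n : ℕ => dist (T^[n] x) (T^[n] y)) atTop = 0

/-- A proximal system: every pair of points is proximal. -/
def ProximalSystem [MetricSpace X] (T : X → X) : Prop :=
  ∀ x y : X, ProximalPair T x y

/-- The proximal cell of `x`. -/
def ProxCell [MetricSpace X] (T : X → X) (x : X) : Set X :=
  {y | ProximalPair T x y}

/-- Li-Yorke sensitivity. -/
def LiYorkeSensitive [MetricSpace X] (T : X → X) : Prop :=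
  ∃ δ : ℝ, 0 < δ ∧ ∀ x : X, ∀ U ∈ 𝓝 x, ∃ y ∈ U,
    liminf (fun n : ℕ => dist (T^[n] x) (T^[n] y)) atTop = 0 ∧
    δ < limsup (fun n : ℕ => dist (T^[n] x) (T^[n] y)) atTop

/-- Spatio-temporally chaotic system. -/
def SpatioTemporallyChaotic [MetricSpace X] (T : X → X) : Prop :=
  ∀ x : X, ∀ U ∈ 𝓝 x, ∃ y ∈ U,
    liminf (fun n : ℕ => dist (T^[n] x) (T^[n] y)) atTop = 0 ∧
    0 < limsup (fun n : ℕ => dist (T^[n] x) (T^[n] y)) atTop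

/-- A distal point: not proximal to any other point of its orbit closure. -/
def IsDistalPoint [MetricSpace X] (T : X → X) (x : X) : Prop :=
  ∀ y ∈ closure (Set.range fun n : ℕ => T^[n] x), y ≠ x →
    0 < liminf (fun n : ℕ => dist (T^[n] x) (T^[n] y)) atTop

/-- The Lyapunov number `𝕃_r`. -/
noncomputable def LyapR [MetricSpace X] (T : X → X) : ℝ :=
  sSup {δ : ℝ | 0 < δ ∧ ∀ x : X, ∀ U : Set X, IsOpen U → x ∈ U →
    ∃ y ∈ U, ∃ n : ℕ, δ < dist (T^[n] x) (T^[n] y)}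

/-- The Lyapunov number `𝕃̄_r`. -/
noncomputable def LyapRbar [MetricSpace X] (T : X → X) : ℝ :=
  sSup {δ : ℝ | 0 < δ ∧ ∀ x : X, ∀ U : Set X, IsOpen U → x ∈ U →
    ∃ y ∈ U, δ < limsup (fun n : ℕ => dist (T^[n] x) (T^[n] y)) atTop}

/-- `min_{1≤i≤k} d(Tⁿ xᵢ, Tⁿ yᵢ)`. -/
noncomputable def minDist [MetricSpace X] (T : X → X) {k : ℕ}
    (x y : Fin (k + 1) → X) (n : ℕ) : ℝ :=
  Finset.univ.inf' Finset.univ_nonempty (fun i => dist (T^[n] (x i)) (T^[n] (y i)))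

/-- The Lyapunov number `𝕃_{m,r}`. -/
noncomputable def LyapMR [MetricSpace X] (T : X → X) : ℝ :=
  sSup {δ : ℝ | 0 < δ ∧ ∀ (k : ℕ) (x : Fin (k + 1) → X) (U : Fin (k + 1) → Set X),
    (∀ i, IsOpen (U i) ∧ x i ∈ U i) →
    ∃ y : Fin (k + 1) → X, (∀ i, y i ∈ U i) ∧ ∃ n : ℕ, δ < minDist T x y n}

/-- The Lyapunov number `𝕃̄_{m,r}`. -/
noncomputable def LyapMRbar [MetricSpace X] (T : X → X) : ℝ :=
  sSup {δ : ℝ | 0 < δ ∧ ∀ (k : ℕ) (x : Fin (k + 1) → X) (U : Fin (k + 1) → Set X),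
    (∀ i, IsOpen (U i) ∧ x i ∈ U i) →
    ∃ y : Fin (k + 1) → X, (∀ i, y i ∈ U i) ∧
      δ < limsup (fun n : ℕ => minDist T x y n) atTop}

/-- The Lyapunov number `𝕃_{m,d}`. -/
noncomputable def LyapMD [MetricSpace X] (T : X → X) : ℝ :=
  sSup {δ : ℝ | 0 < δ ∧ ∀ (k : ℕ) (U : Fin (k + 1) → Set X), (∀ i, Opene (U i)) →
    ∃ x y : Fin (k + 1) → X, (∀ i, x i ∈ U i ∧ y i ∈ U i) ∧ ∃ n : ℕ, δ < minDist T x y n}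

/-- The Lyapunov number `𝕃̄_{m,d}`. -/
noncomputable def LyapMDbar [MetricSpace X] (T : X → X) : ℝ :=
  sSup {δ : ℝ | 0 < δ ∧ ∀ (k : ℕ) (U : Fin (k + 1) → Set X), (∀ i, Opene (U i)) →
    ∃ x y : Fin (k + 1) → X, (∀ i, x i ∈ U i ∧ y i ∈ U i) ∧
      δ < limsup (fun n : ℕ => minDist T x y n) atTop}

/-- `(k,T,ε)`-separated set with respect to the sequence `ns` (with `ns 0 = 0` by convention). -/
def IsSepSet [MetricSpace X] (T : X → X) (ns : ℕ → ℕ) (k : ℕ) (ε : ℝ) (E : Set X) : Prop :=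
  ∀ x ∈ E, ∀ y ∈ E, x ≠ y → ∃ j < k, ε < dist (T^[ns j] x) (T^[ns j] y)

/-- `sep(k,T,ε)`: maximal cardinality of a `(k,T,ε)`-separated set. -/
noncomputable def sepNum [MetricSpace X] (T : X → X) (ns : ℕ → ℕ) (k : ℕ) (ε : ℝ) : ℕ :=
  sSup {r : ℕ | ∃ E : Finset X, IsSepSet T ns k ε ↑E ∧ E.card = r}

/-- Topological sequence entropy along `ns`:
`h_N(T) = lim_{ε→0} limsup_{k→∞} (1/k) log sep(k,T,ε)` (the limit as `ε → 0⁺` of the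
nonincreasing-in-`ε` quantity, i.e. the supremum over `ε > 0`). -/
noncomputable def seqEntropy [MetricSpace X] (T : X → X) (ns : ℕ → ℕ) : EReal :=
  ⨆ (ε : ℝ) (_ : 0 < ε),
    limsup (fun k : ℕ => ((Real.log (sepNum T ns k ε) / k : ℝ) : EReal)) atTop

end Defs

/-
Weak mixing makes every `N_T(U,V)` thick: the product system lets one shrink finitely many
pairs `(U, T⁻ⁱV)` to a single pair, and transitivity then gives a common hitting time. Minimality
on a compact space makes every `N_T(x,G)` syndetic. A thick and a syndetic set meet, so each `z`
lies in `ω_{N_T}(x)`. Conversely, with `U = V = X` the condition says the orbit of `x` accumulates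
everywhere, and the condition at `c ∈ V₁` for a point `a ∈ U₁` produces a common time in
`N_T(U₁,V₁) ∩ N_T(U₂,V₂)`, which is weak mixing.
-/

section Dynamics

variable {X Y : Type*}

lemma NTset_mono {T : X → X} {U U' V V' : Set X} (hU : U ⊆ U') (hV : V ⊆ V') :
    NTset T U V ⊆ NTset T U' V' :=
  fun _ ⟨p, hpU, hpV⟩ => ⟨p, hU hpU, hV hpV⟩

lemma NTpt_subset_NTset {T : X → X} {x : X} {U : Set X} (hx : x ∈ U) (V : Set X) :
    NTpt T x V ⊆ NTset T U V :=
  fun _ hn => ⟨x, hx, hn⟩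

lemma mem_NTset_preimage_iterate_iff {T : X → X} {U V : Set X} {m k : ℕ} :
    m ∈ NTset T U (T^[k] ⁻¹' V) ↔ m + k ∈ NTset T U V := by
  simp only [NTset, Set.preimage_preimage, ← Function.iterate_add_apply, Nat.add_comm k]
  rfl

lemma NTset_prodMap (S : X → X) (T : Y → Y) (U₁ V₁ : Set X) (U₂ V₂ : Set Y) :
    NTset (Prod.map S T) (U₁ ×ˢ U₂) (V₁ ×ˢ V₂) = NTset S U₁ V₁ ∩ NTset T U₂ V₂ := by
  ext n
  simp only [NTset, Set.mem_inter_iff, Prod.map_iterate, Set.preimage_prod_map_prod,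
    Set.prod_inter_prod, Set.prod_nonempty_iff]
  rfl

lemma Opene.preimage [TopologicalSpace X] {f : X → X} (hf : Continuous f)
    (hf' : Function.Surjective f) {V : Set X} (hV : Opene V) : Opene (f ⁻¹' V) :=
  ⟨hV.1.preimage hf, hV.2.preimage hf'⟩

lemma Opene.exists_prod_subset [TopologicalSpace X] [TopologicalSpace Y] {W : Set (X × Y)}
    (hW : Opene W) : ∃ U V, Opene U ∧ Opene V ∧ U ×ˢ V ⊆ W := by
  obtain ⟨⟨a, b⟩, hab⟩ := hW.2
  obtain ⟨U, V, hU, hV, ha, hb, hUV⟩ := isOpen_prod_iff.mp hW.1 a b hab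
  exact ⟨U, V, ⟨hU, a, ha⟩, ⟨hV, b, hb⟩, hUV⟩

lemma SyndeticSet.inter_nonempty_of_thickSet {A B : Set ℕ} (hA : SyndeticSet A)
    (hB : ThickSet B) : (A ∩ B).Nonempty := by
  obtain ⟨N, hN⟩ := hA
  obtain ⟨m, hm⟩ := hB N
  obtain ⟨j, hjN, hj⟩ := hN m
  exact ⟨m + j, hj, hm j hjN⟩

variable [TopologicalSpace X] {T : X → X}

lemma weaklyMixing_of_inter_NTset_nonempty
    (h : ∀ U₁ V₁ U₂ V₂ : Set X, Opene U₁ → Opene V₁ → Opene U₂ → Opene V₂ →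
      (NTset T U₁ V₁ ∩ NTset T U₂ V₂).Nonempty) :
    WeaklyMixing T := by
  intro W W' hW hW'
  obtain ⟨U₁, U₂, hU₁, hU₂, hU⟩ := hW.exists_prod_subset
  obtain ⟨V₁, V₂, hV₁, hV₂, hV⟩ := hW'.exists_prod_subset
  refine (h U₁ V₁ U₂ V₂ hU₁ hV₁ hU₂ hV₂).mono ?_
  rw [← NTset_prodMap]
  exact NTset_mono hU hV

namespace WeaklyMixing

lemma inter_NTset_nonempty (hT : WeaklyMixing T) {U₁ V₁ U₂ V₂ : Set X} (hU₁ : Opene U₁)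
    (hV₁ : Opene V₁) (hU₂ : Opene U₂) (hV₂ : Opene V₂) :
    (NTset T U₁ V₁ ∩ NTset T U₂ V₂).Nonempty := by
  rw [← NTset_prodMap]
  exact hT _ _ ⟨hU₁.1.prod hU₂.1, hU₁.2.prod hU₂.2⟩ ⟨hV₁.1.prod hV₂.1, hV₁.2.prod hV₂.2⟩

lemma topTransitive (hT : WeaklyMixing T) : TopTransitive T :=
  fun _ _ hU hV => (hT.inter_NTset_nonempty hU hV hU hV).mono Set.inter_subset_left

/-- The pair `(U₁ ∩ T⁻ⁿU₂, V₁ ∩ T⁻ⁿV₂)`, for a common time `n ∈ N_T(U₁,U₂) ∩ N_T(V₁,V₂)`,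
has hitting times in both `N_T(U₁,V₁)` and `N_T(U₂,V₂)`. -/
lemma exists_NTset_subset_inter (hT : WeaklyMixing T) (hTc : Continuous T)
    {U₁ V₁ U₂ V₂ : Set X} (hU₁ : Opene U₁) (hV₁ : Opene V₁) (hU₂ : Opene U₂) (hV₂ : Opene V₂) :
    ∃ U V, Opene U ∧ Opene V ∧ NTset T U V ⊆ NTset T U₁ V₁ ∩ NTset T U₂ V₂ := by
  obtain ⟨n, ⟨p, hp₁, hp₂⟩, ⟨q, hq₁, hq₂⟩⟩ := hT.inter_NTset_nonempty hU₁ hU₂ hV₁ hV₂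
  refine ⟨U₁ ∩ T^[n] ⁻¹' U₂, V₁ ∩ T^[n] ⁻¹' V₂,
    ⟨hU₁.1.inter (hU₂.1.preimage (hTc.iterate n)), p, hp₁, hp₂⟩,
    ⟨hV₁.1.inter (hV₂.1.preimage (hTc.iterate n)), q, hq₁, hq₂⟩, ?_⟩
  rintro m ⟨r, ⟨hr₁, hr₂⟩, hr₃, hr₄⟩
  refine ⟨⟨r, hr₁, hr₃⟩, T^[n] r, hr₂, ?_⟩
  rw [Set.mem_preimage, ← Function.iterate_add_apply, Nat.add_comm,
    Function.iterate_add_apply]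
  exact hr₄

lemma exists_NTset_subset_iInter (hT : WeaklyMixing T) (hTc : Continuous T)
    {U V : ℕ → Set X} (hU : ∀ i, Opene (U i)) (hV : ∀ i, Opene (V i)) (L : ℕ) :
    ∃ U' V', Opene U' ∧ Opene V' ∧ ∀ m ∈ NTset T U' V', ∀ i ≤ L, m ∈ NTset T (U i) (V i) := by
  induction L with
  | zero =>
    refine ⟨U 0, V 0, hU 0, hV 0, fun m hm i hi => ?_⟩
    rwa [Nat.le_zero.mp hi]
  | succ L ih =>
    obtain ⟨U', V', hU', hV', hL⟩ := ih
    obtain ⟨U'', V'', hU'', hV'', hsub⟩ :=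
      hT.exists_NTset_subset_inter hTc hU' hV' (hU (L + 1)) (hV (L + 1))
    refine ⟨U'', V'', hU'', hV'', fun m hm i hi => ?_⟩
    rcases Nat.le_succ_iff.mp hi with hi | rfl
    · exact hL m (hsub hm).1 i hi
    · exact (hsub hm).2

lemma thickSet_NTset (hT : WeaklyMixing T) (hTc : Continuous T) (hTs : Function.Surjective T)
    {U V : Set X} (hU : Opene U) (hV : Opene V) : ThickSet (NTset T U V) := by
  intro N
  obtain ⟨U', V', hU', hV', hsub⟩ := hT.exists_NTset_subset_iInter hTc (fun _ => hU)
    (fun i => hV.preimage (hTc.iterate i) (hTs.iterate i)) N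
  obtain ⟨m, hm⟩ := hT.topTransitive U' V' hU' hV'
  exact ⟨m, fun i hi => mem_NTset_preimage_iterate_iff.mp (hsub m hm i hi)⟩

end WeaklyMixing

/-- A finite subcover of `X = ⋃ₙ T⁻ⁿG` bounds the gaps of `N_T(x,G)`. -/
lemma MinimalSystem.syndeticSet_NTpt [CompactSpace X] (hT : MinimalSystem T)
    (hTc : Continuous T) (x : X) {G : Set X} (hG : Opene G) : SyndeticSet (NTpt T x G) := by
  have hcover : Set.univ ⊆ ⋃ n : ℕ, T^[n] ⁻¹' G := fun y _ => by
    obtain ⟨_, ⟨n, rfl⟩, hn⟩ := (hT y).exists_mem_open hG.1 hG.2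
    exact Set.mem_iUnion.mpr ⟨n, hn⟩
  obtain ⟨s, hs⟩ := isCompact_univ.elim_finite_subcover _
    (fun n => hG.1.preimage (hTc.iterate n)) hcover
  refine ⟨s.sup id, fun i => ?_⟩
  obtain ⟨j, hj, hjG⟩ := Set.mem_iUnion₂.mp (hs (Set.mem_univ (T^[i] x)))
  refine ⟨j, Finset.le_sup (f := id) hj, ?_⟩
  change T^[i + j] x ∈ G
  rwa [Nat.add_comm, Function.iterate_add_apply]

lemma omegaNT_subset_closure_range_iterate (x : X) :
    omegaNT T x ⊆ closure (Set.range fun n : ℕ => T^[n] x) := by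
  intro z hz
  have huniv : Opene (Set.univ : Set X) := ⟨isOpen_univ, z, trivial⟩
  refine mem_closure_iff.mpr fun G hG hzG => ?_
  obtain ⟨n, hn, -⟩ := hz G hG hzG _ _ huniv huniv
  exact ⟨T^[n] x, hn, n, rfl⟩

end Dynamics

theorem stmt6_general {X : Type*} [MetricSpace X] [CompactSpace X]
    {T : X → X} (hTc : Continuous T) (hTs : Function.Surjective T) :
    (MinimalSystem T ∧ WeaklyMixing T) ↔ (∀ x : X, omegaNT T x = Set.univ) := by
  constructor
  · rintro ⟨hmin, hwm⟩ x
    refine Set.eq_univ_of_forall fun z G hG hzG U V hU hV => ?_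
    exact (hmin.syndeticSet_NTpt hTc x ⟨hG, z, hzG⟩).inter_nonempty_of_thickSet
      (hwm.thickSet_NTset hTc hTs hU hV)
  · intro h
    refine ⟨fun x => dense_iff_closure_eq.mpr ?_, weaklyMixing_of_inter_NTset_nonempty ?_⟩
    · exact Set.eq_univ_of_univ_subset (h x ▸ omegaNT_subset_closure_range_iterate x)
    · rintro U₁ V₁ U₂ V₂ ⟨-, a, ha⟩ ⟨hV₁, c, hc⟩ hU₂ hV₂
      obtain ⟨n, hn, hn₂⟩ := (h a ▸ Set.mem_univ c : c ∈ omegaNT T a) V₁ hV₁ hc U₂ V₂ hU₂ hV₂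
      exact ⟨n, NTpt_subset_NTset ha V₁ hn, hn₂⟩

/-- A system is minimal and weakly mixing iff `ω_{N_T}(x) = X` for every `x`. -/
theorem stmt6 {X : Type*} [MetricSpace X] [CompactSpace X] [Nontrivial X]
    (hperf : ∀ x : X, (𝓝[≠] x).NeBot)
    {T : X → X} (hTc : Continuous T) (hTs : Function.Surjective T) :
    (MinimalSystem T ∧ WeaklyMixing T) ↔ (∀ x : X, omegaNT T x = Set.univ) :=
  stmt6_general hTc hTs
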